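/- arXiv:0809.1216 — 9 statements merged into one kernel-verified Lean document; each statement's English description precedes it below -/
import Mathlib

section
/- Let I ⊆ ℝ be an open interval, κ ∈ {-1, 1}, and V : I → ℝ a continuously differentiable function with V(x) ≠ 0 for all x ∈ I. Suppose y : I → ℝ is differentiable, satisfies |y(x)| > 1 for all x ∈ I, and solves the Abel equation of the first kind y'(x) = −(1/2)(y(x)² − 1)(κ − χ'(x)·y(x)), where χ(x) = log|V(x)|. Define W(x) = V(x)·θ²(y(x)) where θ²(y) = (((y + √(y²−1))² + 1)/(1 − (y + √(y²−1))²))². Then W is differentiable, W(x) ≠ 0, and V(x) = W(x) − (W'(x))²/W(x) for all x ∈ I (equivalently, in the scalar-field variable φ = x/(3√2), V = W − (dW/dφ)²/(18W)). -/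
/-- θ²(y) = (((y + √(y²−1))² + 1)/(1 − (y + √(y²−1))²))². -/
noncomputable def theta2 (y : ℝ) : ℝ :=
  (((y + Real.sqrt (y ^ 2 - 1)) ^ 2 + 1) / (1 - (y + Real.sqrt (y ^ 2 - 1)) ^ 2)) ^ 2

lemma theta2_eq (y : ℝ) (hy : 1 < |y|) : theta2 y = y ^ 2 / (y ^ 2 - 1) := by
  have hy2 : (1:ℝ) < y ^ 2 := by
    have := sq_abs y
    nlinarith [abs_nonneg y]
  set s := Real.sqrt (y ^ 2 - 1) with hs
  have hs2 : s ^ 2 = y ^ 2 - 1 := Real.sq_sqrt (by linarith)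
  have hspos : 0 < s := Real.sqrt_pos.mpr (by linarith)
  have hslt : s < |y| := by
    have h1 : s ^ 2 < |y| ^ 2 := by rw [sq_abs]; nlinarith
    nlinarith [abs_nonneg y]
  have hu : y + s ≠ 0 := by
    rcases abs_cases y with ⟨h1, h2⟩ | ⟨h1, h2⟩
    · nlinarith
    · nlinarith
  have e1 : (y + s) ^ 2 + 1 = 2 * y * (y + s) := by linear_combination hs2
  have e2 : 1 - (y + s) ^ 2 = -(2 * s * (y + s)) := by linear_combination hs2
  unfold theta2
  rw [← hs, e1, e2]
  rw [show (2 * y * (y + s)) / (-(2 * s * (y + s))) = -(y / s) by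
    field_simp]
  rw [neg_pow, div_pow, hs2]
  ring

/-- Main Theorem: a solution `y` of the Abel equation
`y' = -(1/2)(y² - 1)(κ - χ' y)`, `χ = log |V|`, with `|y| > 1`, produces a
hamiltonian `W = V · θ²(y)` satisfying `V = W - (W_x)²/W` on the open interval `I`. -/
theorem stmt0 (I : Set ℝ) (hIopen : IsOpen I) (hIconn : IsPreconnected I)
    (κ : ℝ) (hκ : κ = -1 ∨ κ = 1)
    (V V' y : ℝ → ℝ)
    (hV : ∀ x ∈ I, HasDerivAt V (V' x) x)
    (hV'cont : ContinuousOn V' I)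
    (hVne : ∀ x ∈ I, V x ≠ 0)
    (hy1 : ∀ x ∈ I, 1 < |y x|)
    (habel : ∀ x ∈ I, HasDerivAt y
      (-(1/2) * (y x ^ 2 - 1) * (κ - (deriv (fun t => Real.log |V t|) x) * y x)) x)
    (W : ℝ → ℝ) (hW : W = fun x => V x * theta2 (y x)) :
    ∀ x ∈ I, DifferentiableAt ℝ W x ∧ W x ≠ 0 ∧
      V x = W x - (deriv W x) ^ 2 / W x := by
  intro x hx
  have hVx := hV x hx
  have hVne' := hVne x hx
  have hy2 : (1:ℝ) < y x ^ 2 := by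
    have h := hy1 x hx
    have := sq_abs (y x)
    nlinarith [abs_nonneg (y x)]
  have hden : y x ^ 2 - 1 ≠ 0 := by nlinarith
  -- derivative of χ = log |V|
  have hlog : HasDerivAt (fun t => Real.log |V t|) (V' x / V x) x := by
    have h1 : HasDerivAt (fun t => Real.log (V t)) (V' x / V x) x := by
      have := hVx.log hVne'
      simpa [div_eq_mul_inv] using this
    have : (fun t => Real.log |V t|) = fun t => Real.log (V t) := by
      funext t; rw [Real.log_abs]
    rw [this]; exact h1
  have hχ : deriv (fun t => Real.log |V t|) x = V' x / V x := hlog.deriv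
  have hy' : HasDerivAt y
      (-(1/2) * (y x ^ 2 - 1) * (κ - (V' x / V x) * y x)) x := by
    have := habel x hx
    rwa [hχ] at this
  -- derivative of g = V * (y²/(y²-1))
  have hnum : HasDerivAt (fun t => y t ^ 2)
      (2 * y x ^ 1 * (-(1/2) * (y x ^ 2 - 1) * (κ - (V' x / V x) * y x))) x := by
    simpa using hy'.fun_pow 2
  have hdenf : HasDerivAt (fun t => y t ^ 2 - 1)
      (2 * y x ^ 1 * (-(1/2) * (y x ^ 2 - 1) * (κ - (V' x / V x) * y x))) x := by
    simpa using hnum.sub_const 1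
  have hdiv := hnum.div hdenf hden
  have hg := hVx.mul hdiv
  -- g has derivative κ V y / (y²-1)
  set d := κ * V x * y x / (y x ^ 2 - 1) with hd
  have hdval : HasDerivAt (fun t => V t * (y t ^ 2 / (y t ^ 2 - 1))) d x := by
    refine hg.congr_deriv ?_
    rw [hd]
    simp only [Pi.div_apply]
    field_simp
    ring
  -- W eventually equals g near x
  have heq : W =ᶠ[nhds x] (fun t => V t * (y t ^ 2 / (y t ^ 2 - 1))) := by
    filter_upwards [hIopen.mem_nhds hx] with t ht
    rw [hW]
    simp only
    rw [theta2_eq (y t) (hy1 t ht)]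
  have hWd : HasDerivAt W d x := hdval.congr_of_eventuallyEq heq
  have hWx : W x = V x * (y x ^ 2 / (y x ^ 2 - 1)) := by
    rw [hW]; simp only; rw [theta2_eq (y x) (hy1 x hx)]
  have hWne : W x ≠ 0 := by
    rw [hWx]
    apply mul_ne_zero hVne'
    positivity
  refine ⟨hWd.differentiableAt, hWne, ?_⟩
  rw [hWd.deriv, hWx, hd]
  have hyx : y x ≠ 0 := by
    rintro h; rw [h] at hy2; norm_num at hy2
  rcases hκ with h | h <;> subst h <;> field_simp
end

section
/- Let W : ℝ → ℝ be twice continuously differentiable with W(u) > 0 for all u, and define V(u) = W(u) − (W'(u))²/(18·W(u)). Suppose φ : ℝ → ℝ is differentiable and solves φ'(t) = −W'(φ(t))/(3·√(W(φ(t)))), and set H(t) = √(W(φ(t))). Then φ is twice differentiable and the flat (k = 0) Friedmann system holds: φ''(t) + 3H(t)φ'(t) + V'(φ(t)) = 0 and H(t)² = (1/2)φ'(t)² + V(φ(t)) for all t ∈ ℝ. -/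
/-- Proposition 1 / equations (4)–(6): if `W` is C², positive, and
`V = W - (W')²/(18W)`, then any solution of `φ' = -W'(φ)/(3√W(φ))` with
`H = √W(φ)` solves the flat Friedmann system
`φ'' + 3Hφ' + V'(φ) = 0`, `H² = (1/2)φ'² + V(φ)`. -/
theorem stmt5 (W : ℝ → ℝ) (hW : ContDiff ℝ 2 W) (hWpos : ∀ u, 0 < W u)
    (V : ℝ → ℝ) (hV : V = fun u => W u - (deriv W u) ^ 2 / (18 * W u))
    (φ : ℝ → ℝ)
    (hφ : ∀ t, HasDerivAt φ (-(deriv W (φ t)) / (3 * Real.sqrt (W (φ t)))) t)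
    (H : ℝ → ℝ) (hH : H = fun t => Real.sqrt (W (φ t))) :
    (∀ t, DifferentiableAt ℝ (deriv φ) t) ∧
    (∀ t, deriv (deriv φ) t + 3 * H t * deriv φ t + deriv V (φ t) = 0) ∧
    (∀ t, H t ^ 2 = (1/2) * (deriv φ t) ^ 2 + V (φ t)) := by
  -- derivatives of W
  have hW2 : ContDiff ℝ ((1:ℕ∞)+1) W := by norm_num; exact hW
  have hWd : ContDiff ℝ 1 (deriv W) := (contDiff_succ_iff_deriv.mp hW2).2.2
  have hW1 : ∀ u, HasDerivAt W (deriv W u) u := fun u =>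
    (hW.differentiable two_ne_zero u).hasDerivAt
  have hW1' : ∀ u, HasDerivAt (deriv W) (deriv (deriv W) u) u := fun u =>
    (hWd.differentiable one_ne_zero u).hasDerivAt
  have hWne : ∀ u, W u ≠ 0 := fun u => (hWpos u).ne'
  have hsp : ∀ u, 0 < Real.sqrt (W u) := fun u => Real.sqrt_pos.mpr (hWpos u)
  have hsq : ∀ u, Real.sqrt (W u) ^ 2 = W u := fun u =>
    Real.sq_sqrt (hWpos u).le
  -- derivative of √(W u)
  have hS : ∀ u, HasDerivAt (fun u => Real.sqrt (W u))
      (deriv W u / (2 * Real.sqrt (W u))) u := by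
    intro u
    have := (Real.hasDerivAt_sqrt (hWne u)).comp u (hW1 u)
    convert this using 1
    exacts [rfl, rfl, rfl, by ring]
  -- F = the RHS of the ODE
  set F : ℝ → ℝ := fun u => -(deriv W u) / (3 * Real.sqrt (W u)) with hF
  set F' : ℝ → ℝ := fun u =>
      ((-(deriv (deriv W) u)) * (3 * Real.sqrt (W u)) -
        (-(deriv W u)) * (3 * (deriv W u / (2 * Real.sqrt (W u))))) /
        (3 * Real.sqrt (W u)) ^ 2 with hF'
  have hFd : ∀ u, HasDerivAt F (F' u) u := by
    intro u
    exact HasDerivAt.div (hW1' u).neg ((hS u).const_mul 3)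
      (by have := hsp u; positivity)
  -- deriv φ = F ∘ φ
  have hφd : deriv φ = fun t => F (φ t) := funext fun t => (hφ t).deriv
  have hφ2 : ∀ t, HasDerivAt (deriv φ) (F' (φ t) * F (φ t)) t := by
    intro t
    rw [hφd]
    exact (hFd (φ t)).comp t (hφ t)
  -- derivative of V
  have hVd : ∀ u, HasDerivAt V
      (deriv W u - ((2 * deriv W u * deriv (deriv W) u) * (18 * W u) -
        (deriv W u) ^ 2 * (18 * deriv W u)) / (18 * W u) ^ 2) u := by
    intro u
    rw [hV]
    refine (hW1 u).sub (HasDerivAt.div ?_ ((hW1 u).const_mul 18) (by have := hWpos u; positivity))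
    have := ((hW1' u).pow 2)
    convert this using 1
    exacts [rfl, by norm_num]
  refine ⟨fun t => (hφ2 t).differentiableAt, fun t => ?_, fun t => ?_⟩
  · rw [(hφ2 t).deriv, hφd, (hVd (φ t)).deriv, hH]
    set u := φ t
    set s := Real.sqrt (W u) with hs
    have h1 : s ^ 2 = W u := hsq u
    have h2 : s ≠ 0 := (hsp u).ne'
    have h3 : W u ≠ 0 := hWne u
    rw [hF, hF']
    simp only
    rw [← h1]
    rw [Real.sqrt_sq (hsp u).le]
    rw [show φ t = u from rfl, ← hs]
    field_simp
    ring
  · rw [hφd, hH, hV]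
    simp only
    set u := φ t
    set s := Real.sqrt (W u) with hs
    have h1 : s ^ 2 = W u := hsq u
    have h2 : s ≠ 0 := (hsp u).ne'
    rw [hF, ← h1]
    simp only
    rw [← hs]
    field_simp
    ring
end

section
/- Let k ∈ {−1, 0, 1}, let I ⊆ ℝ be an open interval, and let a : I → ℝ be twice differentiable with a(t) > 0 and a'(t)² − a(t)a''(t) + k > 0 on I. Suppose φ : I → ℝ is differentiable and satisfies φ'(t) = √(2/3)·√(a'(t)² − a(t)a''(t) + k)/a(t), and define V(t) = (a(t)a''(t) + 2a'(t)² + 2k)/(3a(t)²) and H(t) = a'(t)/a(t). Then: (i) H(t)² = (1/2)φ'(t)² + V(t) − k/a(t)² for all t ∈ I, and (ii) the function t ↦ (1/2)φ'(t)² + V(t) has derivative equal to −3H(t)·φ'(t)² on I. -/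
/-- Remark 1 (the "inverse problem"): for any twice differentiable scale factor
`a` with `a > 0` and `a'² - a a'' + k > 0` on an open interval `I`, the scalar
field `φ` with `φ' = √(2/3)·√(a'² - a a'' + k)/a` and the potential
`V = (a a'' + 2a'² + 2k)/(3a²)` satisfy the Friedmann constraint
`H² = (1/2)φ'² + V - k/a²` and the energy equation `(½φ'² + V)' = -3Hφ'²`. -/
theorem stmt6 (k : ℝ) (hk : k = -1 ∨ k = 0 ∨ k = 1)
    (I : Set ℝ) (hIopen : IsOpen I) (hIconn : IsPreconnected I)
    (a a' a'' φ : ℝ → ℝ)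
    (ha : ∀ t ∈ I, HasDerivAt a (a' t) t)
    (ha' : ∀ t ∈ I, HasDerivAt a' (a'' t) t)
    (hapos : ∀ t ∈ I, 0 < a t)
    (hpos : ∀ t ∈ I, 0 < a' t ^ 2 - a t * a'' t + k)
    (hφ : ∀ t ∈ I, HasDerivAt φ
      (Real.sqrt (2/3) * Real.sqrt (a' t ^ 2 - a t * a'' t + k) / a t) t)
    (V H : ℝ → ℝ)
    (hV : V = fun t => (a t * a'' t + 2 * a' t ^ 2 + 2 * k) / (3 * a t ^ 2))
    (hH : H = fun t => a' t / a t) :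
    (∀ t ∈ I, H t ^ 2 = (1/2) * (deriv φ t) ^ 2 + V t - k / a t ^ 2) ∧
    (∀ t ∈ I, HasDerivAt (fun s => (1/2) * (deriv φ s) ^ 2 + V s)
      (-3 * H t * (deriv φ t) ^ 2) t) := by
  have hsq : ∀ t ∈ I, (deriv φ t) ^ 2
      = (2/3) * (a' t ^ 2 - a t * a'' t + k) / a t ^ 2 := by
    intro t ht
    rw [(hφ t ht).deriv, div_pow, mul_pow, Real.sq_sqrt (by norm_num : (2:ℝ)/3 ≥ 0),
      Real.sq_sqrt (hpos t ht).le]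
  have hW : ∀ t ∈ I, (1/2) * (deriv φ t) ^ 2 + V t = (a' t ^ 2 + k) / a t ^ 2 := by
    intro t ht
    rw [hsq t ht, hV]
    have hane : a t ≠ 0 := (hapos t ht).ne'
    field_simp
    ring
  constructor
  · intro t ht
    rw [hW t ht, hH]
    have hane : a t ≠ 0 := (hapos t ht).ne'
    field_simp
    ring
  · intro t ht
    have hane : a t ≠ 0 := (hapos t ht).ne'
    have ha2ne : a t ^ 2 ≠ 0 := pow_ne_zero 2 hane
    have hg : HasDerivAt (fun s => (a' s ^ 2 + k) / a s ^ 2)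
        ((2 * a' t * a'' t * a t ^ 2 - (a' t ^ 2 + k) * (2 * a t * a' t)) / (a t ^ 2) ^ 2) t := by
      exact HasDerivAt.div (by simpa using ((ha' t ht).pow 2).add_const k)
        (by simpa using (ha t ht).fun_pow 2) ha2ne
    have heq : (fun s => (1/2) * (deriv φ s) ^ 2 + V s)
        =ᶠ[nhds t] (fun s => (a' s ^ 2 + k) / a s ^ 2) := by
      filter_upwards [hIopen.mem_nhds ht] with s hs using hW s hs
    have := hg.congr_of_eventuallyEq heq
    refine this.congr_deriv ?_
    rw [hsq t ht, hH]
    field_simp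
    ring
end

section
/- Let λ > 0, ε ∈ {−1, 1}, φ₀ ≠ 0, a₀ > 0, t₀ ∈ ℝ, and define on ℝ: φ(t) = φ₀·exp(ε·(2√λ/3)(t − t₀)), H(t) = −ε·(√λ·φ₀²/2)·exp(ε·(4√λ/3)(t − t₀)), a(t) = a₀·exp((3φ₀²/8)·(1 − exp(ε·(4√λ/3)(t − t₀)))), and V(u) = λu⁴/4 − (2λ/9)·u². Then H(t) = a'(t)/a(t), H(t)² = (1/2)φ'(t)² + V(φ(t)), and φ''(t) + 3H(t)φ'(t) + V'(φ(t)) = 0 for all t ∈ ℝ. -/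
private lemma expDeriv (c t₀ t : ℝ) :
    HasDerivAt (fun t => Real.exp (c * (t - t₀))) (c * Real.exp (c * (t - t₀))) t := by
  have h : HasDerivAt (fun t : ℝ => c * (t - t₀)) c t := by
    simpa using (((hasDerivAt_id t).sub_const t₀).const_mul c)
  exact ((Real.hasDerivAt_exp (c * (t - t₀))).comp t h).congr_deriv (mul_comm _ _)

/-- Example 1: the explicit functions (8) solve the flat Friedmann system for
the spontaneously-broken-symmetry potential `V(u) = λu⁴/4 - (2λ/9)u²`. -/
theorem stmt7 (lam ε φ₀ a₀ t₀ : ℝ) (hlam : 0 < lam) (hε : ε = -1 ∨ ε = 1)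
    (hφ₀ : φ₀ ≠ 0) (ha₀ : 0 < a₀)
    (φ H a V : ℝ → ℝ)
    (hφ : φ = fun t => φ₀ * Real.exp (ε * (2 * Real.sqrt lam / 3) * (t - t₀)))
    (hH : H = fun t => -ε * (Real.sqrt lam * φ₀ ^ 2 / 2) *
      Real.exp (ε * (4 * Real.sqrt lam / 3) * (t - t₀)))
    (ha : a = fun t => a₀ * Real.exp ((3 * φ₀ ^ 2 / 8) *
      (1 - Real.exp (ε * (4 * Real.sqrt lam / 3) * (t - t₀)))))
    (hV : V = fun u => lam * u ^ 4 / 4 - (2 * lam / 9) * u ^ 2) :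
    ∀ t : ℝ, H t = deriv a t / a t ∧
      H t ^ 2 = (1/2) * (deriv φ t) ^ 2 + V (φ t) ∧
      deriv (deriv φ) t + 3 * H t * deriv φ t + deriv V (φ t) = 0 := by
  set s := Real.sqrt lam with hs
  have hs2 : s ^ 2 = lam := Real.sq_sqrt hlam.le
  have hε2 : ε ^ 2 = 1 := by rcases hε with h | h <;> simp [h]
  set c2 := ε * (2 * s / 3) with hc2
  set c4 := ε * (4 * s / 3) with hc4
  -- derivative of φ
  have hdφ : ∀ t, HasDerivAt φ (φ₀ * (c2 * Real.exp (c2 * (t - t₀)))) t := by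
    intro t; rw [hφ]; exact (expDeriv c2 t₀ t).const_mul φ₀
  have hdφ' : deriv φ = fun t => φ₀ * (c2 * Real.exp (c2 * (t - t₀))) := by
    funext t; exact (hdφ t).deriv
  have hddφ : ∀ t, deriv (deriv φ) t = φ₀ * c2 * (c2 * Real.exp (c2 * (t - t₀))) := by
    intro t
    rw [hdφ']
    have hfun : (fun t => φ₀ * (c2 * Real.exp (c2 * (t - t₀))))
        = fun t => (φ₀ * c2) * Real.exp (c2 * (t - t₀)) := by funext x; ring
    rw [hfun, ((expDeriv c2 t₀ t).const_mul (φ₀ * c2)).deriv]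
  -- derivative of a
  have hda : ∀ t, HasDerivAt a
      (a t * ((3 * φ₀ ^ 2 / 8) * (-(c4 * Real.exp (c4 * (t - t₀)))))) t := by
    intro t
    have hg : HasDerivAt (fun t => (3 * φ₀ ^ 2 / 8) * (1 - Real.exp (c4 * (t - t₀))))
        ((3 * φ₀ ^ 2 / 8) * (-(c4 * Real.exp (c4 * (t - t₀))))) t := by
      have := ((expDeriv c4 t₀ t).const_sub 1).const_mul (3 * φ₀ ^ 2 / 8)
      simpa using this
    have := ((Real.hasDerivAt_exp _).comp t hg).const_mul a₀
    rw [ha]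
    simpa [mul_comm, mul_assoc, mul_left_comm] using this
  -- derivative of V
  have hdV : ∀ u : ℝ, deriv V u = lam * u ^ 3 - (4 * lam / 9) * u := by
    intro u
    rw [hV]
    have h1 : HasDerivAt (fun u : ℝ => lam * u ^ 4 / 4 - (2 * lam / 9) * u ^ 2)
        (lam * u ^ 3 - (4 * lam / 9) * u) u := by
      have h4 := (hasDerivAt_pow 4 u).const_mul lam
      have h2 := (hasDerivAt_pow 2 u).const_mul (2 * lam / 9)
      have := (h4.div_const 4).sub h2
      exact this.congr_deriv (by norm_num; ring)
    exact h1.deriv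
  intro t
  set E := Real.exp (c2 * (t - t₀)) with hE
  set F := Real.exp (c4 * (t - t₀)) with hF
  have hE24 : E ^ 2 = F := by
    rw [hE, hF, ← Real.exp_nat_mul]
    congr 1
    push_cast [hc2, hc4]; ring
  have hat : a t ≠ 0 := by
    rw [ha]; positivity
  refine ⟨?_, ?_, ?_⟩
  · rw [(hda t).deriv, mul_div_cancel_left₀ _ hat, hH]
    simp only [← hF, hc4]; ring
  · rw [(hdφ t).deriv, hH, hφ, hV]
    simp only [← hE, ← hF, hc2, hc4]
    linear_combination (s^2*φ₀^4*F^2/4 - 2/9*φ₀^2*s^2*E^2) * hε2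
      + (φ₀^4*F^2/4 - 2/9*φ₀^2*E^2) * hs2 - lam*φ₀^4/4*(E^2+F)*hE24
  · rw [hddφ t, (hdφ t).deriv, hH, hφ, hdV]
    simp only [← hE, ← hF, hc2, hc4]
    linear_combination ((4/9)*φ₀*E - φ₀^3*F*E)*s^2*hε2
      + ((4/9)*φ₀*E - φ₀^3*F*E)*hs2 + lam*φ₀^3*E*hE24
end

section
/- Let n be a real number, κ ∈ {−1, 1}, and let J ⊆ ℝ be an open interval with y² > 1 for all y ∈ J. Suppose x : J → ℝ is differentiable with x(y) ≠ 0 and κ·x(y) − n·y ≠ 0 on J, and satisfies x'(y) = −2·x(y)/((y² − 1)(κ·x(y) − n·y)) for all y ∈ J. Then the function P(y) = κ·x(y) − n·y satisfies the Abel equation of the second kind P(y)·P'(y) = F₁(y)·P(y) + F₀(y) on J, where F₁(y) = −n − 2/(y² − 1) and F₀(y) = −2ny/(y² − 1). -/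
/-- Remark 6: for `χ' = n/x`, viewing `x = x(y)` as the unknown (so that
`dx/dy` is the reciprocal of the Abel right-hand side), the substitution
`P(y) = κ x(y) - n y` yields the Abel equation of the second kind
`P P' = F₁ P + F₀`. -/
theorem stmt10 (n κ : ℝ) (hκ : κ = -1 ∨ κ = 1)
    (J : Set ℝ) (hJopen : IsOpen J) (hJconn : IsPreconnected J)
    (hJ : ∀ y ∈ J, 1 < y ^ 2)
    (x : ℝ → ℝ)
    (hxne : ∀ y ∈ J, x y ≠ 0)
    (hPne : ∀ y ∈ J, κ * x y - n * y ≠ 0)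
    (hx : ∀ y ∈ J, HasDerivAt x
      (-2 * x y / ((y ^ 2 - 1) * (κ * x y - n * y))) y)
    (P F₁ F₀ : ℝ → ℝ)
    (hP : P = fun y => κ * x y - n * y)
    (hF₁ : F₁ = fun y => -n - 2 / (y ^ 2 - 1))
    (hF₀ : F₀ = fun y => -2 * n * y / (y ^ 2 - 1)) :
    ∀ y ∈ J, P y * deriv P y = F₁ y * P y + F₀ y := by
  intro y hy
  have hy2 : y ^ 2 - 1 ≠ 0 := by have := hJ y hy; linarith
  have hPy := hPne y hy
  have hκ2 : κ * κ = 1 := by rcases hκ with h | h <;> simp [h]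
  have hder : HasDerivAt P
      (κ * (-2 * x y / ((y ^ 2 - 1) * (κ * x y - n * y))) - n * 1) y := by
    subst hP
    exact ((hx y hy).const_mul κ).sub ((hasDerivAt_id y).const_mul n)
  rw [hder.deriv, hP, hF₁, hF₀]
  field_simp
  ring_nf
end

section
/- Let I ⊆ ℝ be an open interval, κ, K ∈ {−1, 1}, and V : I → ℝ continuously differentiable with V(x) ≠ 0 on I. Suppose y : I → ℝ is differentiable, solves y'(x) = −(1/2)(y(x)² − 1)(κ − (V'(x)/V(x))·y(x)), and y(x) ≠ K for all x ∈ I. Define E(x) = V(x)·e^{−κKx} and z(x) = E(x)/(y(x) − K). Then z(x) ≠ 0 and z'(x) + Φ₁(x)/z(x) + Φ₂(x) = 0 for all x ∈ I, where Φ₁(x) = (1/4)·(V²)'(x)·e^{−2κKx} and Φ₂(x) = (1/2)·e^{−κKx}·(3K·V'(x) − κ·V(x)). -/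
/-- Section 3 reduction: using the exact solutions `y = K = ±1` of the Abel
equation, the substitution `y = K + E/z` with `E(x) = V(x)e^{-κKx}` transforms
it into `z' + Φ₁/z + Φ₂ = 0`. -/
theorem stmt11 (I : Set ℝ) (hIopen : IsOpen I) (hIconn : IsPreconnected I)
    (κ K : ℝ) (hκ : κ = -1 ∨ κ = 1) (hK : K = -1 ∨ K = 1)
    (V V' y : ℝ → ℝ)
    (hV : ∀ x ∈ I, HasDerivAt V (V' x) x) (hV'cont : ContinuousOn V' I)
    (hVne : ∀ x ∈ I, V x ≠ 0)
    (habel : ∀ x ∈ I, HasDerivAt y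
      (-(1/2) * (y x ^ 2 - 1) * (κ - (V' x / V x) * y x)) x)
    (hyK : ∀ x ∈ I, y x ≠ K)
    (E z Φ₁ Φ₂ : ℝ → ℝ)
    (hE : E = fun x => V x * Real.exp (-(κ * K * x)))
    (hz : z = fun x => E x / (y x - K))
    (hΦ₁ : Φ₁ = fun x => (1/4) * deriv (fun t => V t ^ 2) x * Real.exp (-(2 * κ * K * x)))
    (hΦ₂ : Φ₂ = fun x => (1/2) * Real.exp (-(κ * K * x)) * (3 * K * V' x - κ * V x)) :
    ∀ x ∈ I, z x ≠ 0 ∧ deriv z x + Φ₁ x / z x + Φ₂ x = 0 := by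
  intro x hx
  subst hE hz hΦ₁ hΦ₂
  have hVx := hVne x hx
  have hyx : y x - K ≠ 0 := sub_ne_zero.mpr (hyK x hx)
  have hexp : Real.exp (-(κ * K * x)) ≠ 0 := Real.exp_ne_zero _
  have hzx : V x * Real.exp (-(κ * K * x)) / (y x - K) ≠ 0 :=
    div_ne_zero (mul_ne_zero hVx hexp) hyx
  refine ⟨hzx, ?_⟩
  have hde : HasDerivAt (fun t => Real.exp (-(κ * K * t)))
      (Real.exp (-(κ * K * x)) * -(κ * K)) x := by
    have h1 : HasDerivAt (fun t : ℝ => -(κ * K * t)) (-(κ * K)) x := by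
      simpa using ((hasDerivAt_id x).const_mul (κ * K)).fun_neg
    simpa [mul_comm] using h1.exp
  have hdE : HasDerivAt (fun t => V t * Real.exp (-(κ * K * t)))
      (V' x * Real.exp (-(κ * K * x)) + V x * (Real.exp (-(κ * K * x)) * -(κ * K))) x :=
    (hV x hx).mul hde
  have hdy := habel x hx
  have hdz := hdE.fun_div (hdy.sub_const K) hyx
  rw [hdz.deriv]
  have hdV2 : deriv (fun t => V t ^ 2) x = 2 * V x * V' x := by
    have h := ((hV x hx).fun_pow 2).deriv
    simpa using h
  beta_reduce
  rw [hdV2]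
  have hexp2 : Real.exp (-(2 * κ * K * x))
      = Real.exp (-(κ * K * x)) * Real.exp (-(κ * K * x)) := by
    rw [← Real.exp_add]; ring_nf
  rw [hexp2]
  rcases hκ with rfl | rfl <;> rcases hK with rfl | rfl <;>
    rw [div_div_eq_mul_div] <;> norm_num at hyx ⊢ <;> field_simp [hVx, hyx] <;> ring
end

section
/- Let Λ > 0, κ ∈ {−1, 1}, φ₀ ∈ ℝ, a₀ > 0, t₀ ∈ ℝ, and define for t > t₀: φ(t) = φ₀ + (√2/(3κ))·arccosh(coth(3√Λ·(t − t₀))) and a(t) = a₀·(sinh(3√Λ·(t − t₀)))^{1/3}. Then with H(t) = a'(t)/a(t) one has: (i) φ'(t) = −κ·√(2Λ)·sinh((3κ/√2)(φ(t) − φ₀)), (ii) H(t)² = (1/2)φ'(t)² + Λ, and (iii) φ''(t) + 3H(t)φ'(t) = 0, for all t > t₀. -/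
/-- The inverse hyperbolic cosine. -/
noncomputable def arccosh (x : ℝ) : ℝ := Real.log (x + Real.sqrt (x ^ 2 - 1))

/-- The hyperbolic cotangent. -/
noncomputable def coth (x : ℝ) : ℝ := Real.cosh x / Real.sinh x

lemma arccosh_coth {s : ℝ} (hs : 0 < s) :
    arccosh (coth s) = Real.log ((Real.cosh s + 1) / Real.sinh s) := by
  have h1 : 0 < Real.sinh s := Real.sinh_pos_iff.2 hs
  have hsq : (Real.cosh s / Real.sinh s) ^ 2 - 1 = (1 / Real.sinh s) ^ 2 := by
    have h := Real.cosh_sq_sub_sinh_sq s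
    field_simp
    exact h
  unfold arccosh coth
  rw [hsq, Real.sqrt_sq (by positivity)]
  congr 1
  field_simp

lemma sinh_arccosh_coth {s : ℝ} (hs : 0 < s) :
    Real.sinh (arccosh (coth s)) = (Real.sinh s)⁻¹ := by
  have h1 : 0 < Real.sinh s := Real.sinh_pos_iff.2 hs
  have h2 : 0 < Real.cosh s + 1 := by nlinarith [Real.cosh_pos s]
  rw [arccosh_coth hs, Real.sinh_log (div_pos h2 h1)]
  have h := Real.cosh_sq_sub_sinh_sq s
  field_simp
  nlinarith

lemma hasDerivAt_F {s : ℝ} (hs : 0 < s) :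
    HasDerivAt (fun x => Real.log ((Real.cosh x + 1) / Real.sinh x)) (-1 / Real.sinh s) s := by
  have h1 : 0 < Real.sinh s := Real.sinh_pos_iff.2 hs
  have h2 : 0 < Real.cosh s + 1 := by nlinarith [Real.cosh_pos s]
  have hd : HasDerivAt (fun x => (Real.cosh x + 1) / Real.sinh x)
      ((Real.sinh s * Real.sinh s - (Real.cosh s + 1) * Real.cosh s) / (Real.sinh s) ^ 2) s :=
    ((Real.hasDerivAt_cosh s).add_const 1).div (Real.hasDerivAt_sinh s) h1.ne'
  have hne : (Real.cosh s + 1) / Real.sinh s ≠ 0 := (div_pos h2 h1).ne'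
  have := hd.log hne
  convert this using 1
  have h := Real.cosh_sq_sub_sinh_sq s
  field_simp
  nlinarith
/-- Section 4, case (c), explicit solution (25)–(26): for constant potential
`V = Λ > 0`, the functions `φ(t) = φ₀ + (√2/(3κ)) arccosh(coth(3√Λ(t-t₀)))`
and `a(t) = a₀ sinh(3√Λ(t-t₀))^{1/3}` solve the flat Friedmann system. -/
theorem stmt13 (Λ κ φ₀ a₀ t₀ : ℝ) (hΛ : 0 < Λ) (hκ : κ = -1 ∨ κ = 1) (ha₀ : 0 < a₀)
    (φ a H : ℝ → ℝ)
    (hφ : φ = fun t => φ₀ + (Real.sqrt 2 / (3 * κ)) *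
      arccosh (coth (3 * Real.sqrt Λ * (t - t₀))))
    (ha : a = fun t => a₀ * (Real.sinh (3 * Real.sqrt Λ * (t - t₀))) ^ ((1:ℝ)/3))
    (hH : H = fun t => deriv a t / a t) :
    ∀ t, t₀ < t →
      deriv φ t = -κ * Real.sqrt (2 * Λ) *
        Real.sinh ((3 * κ / Real.sqrt 2) * (φ t - φ₀)) ∧
      H t ^ 2 = (1/2) * (deriv φ t) ^ 2 + Λ ∧
      deriv (deriv φ) t + 3 * H t * deriv φ t = 0 := by
  have hκ2 : κ ^ 2 = 1 := by rcases hκ with h | h <;> simp [h]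
  have hκ0 : κ ≠ 0 := by rcases hκ with h | h <;> simp [h]
  have hΛ' : 0 < Real.sqrt Λ := Real.sqrt_pos.2 hΛ
  have h2' : (0:ℝ) < Real.sqrt 2 := Real.sqrt_pos.2 (by norm_num)
  have hsq2 : Real.sqrt 2 ^ 2 = 2 := Real.sq_sqrt (by norm_num)
  have hsqΛ : Real.sqrt Λ ^ 2 = Λ := Real.sq_sqrt hΛ.le
  set c : ℝ := 3 * Real.sqrt Λ with hc
  have hc0 : 0 < c := by positivity
  -- derivative of the inner linear map
  have hlin : ∀ x : ℝ, HasDerivAt (fun y => c * (y - t₀)) c x := fun x => by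
    simpa using ((hasDerivAt_id x).sub_const t₀).const_mul c
  -- key: derivative of φ at every x > t₀
  have key : ∀ x, t₀ < x → HasDerivAt φ
      (-(Real.sqrt 2 * Real.sqrt Λ) / κ * (Real.sinh (c * (x - t₀)))⁻¹) x := by
    intro x hx
    have hu : 0 < c * (x - t₀) := mul_pos hc0 (sub_pos.2 hx)
    have hs : 0 < Real.sinh (c * (x - t₀)) := Real.sinh_pos_iff.2 hu
    have hψ : HasDerivAt (fun y => φ₀ + (Real.sqrt 2 / (3 * κ)) *
        Real.log ((Real.cosh (c * (y - t₀)) + 1) / Real.sinh (c * (y - t₀))))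
        ((Real.sqrt 2 / (3 * κ)) * (-1 / Real.sinh (c * (x - t₀)) * c)) x := by
      exact (((hasDerivAt_F hu).comp x (hlin x)).const_mul _).const_add φ₀
    have heq : φ =ᶠ[nhds x] (fun y => φ₀ + (Real.sqrt 2 / (3 * κ)) *
        Real.log ((Real.cosh (c * (y - t₀)) + 1) / Real.sinh (c * (y - t₀)))) := by
      filter_upwards [Ioi_mem_nhds hx] with y hy
      have hy' : 0 < c * (y - t₀) := mul_pos hc0 (sub_pos.2 hy)
      rw [hφ]
      simp only []
      rw [show (3:ℝ) * Real.sqrt Λ * (y - t₀) = c * (y - t₀) by rw [hc],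
        arccosh_coth hy']
    have := hψ.congr_of_eventuallyEq heq
    refine this.congr_deriv ?_
    rw [hc]
    field_simp
  intro t ht
  have hu : 0 < c * (t - t₀) := mul_pos hc0 (sub_pos.2 ht)
  have hs : 0 < Real.sinh (c * (t - t₀)) := Real.sinh_pos_iff.2 hu
  set S : ℝ := Real.sinh (c * (t - t₀)) with hS
  set C : ℝ := Real.cosh (c * (t - t₀)) with hC
  have hCS : C ^ 2 - S ^ 2 = 1 := Real.cosh_sq_sub_sinh_sq _
  have hdφ : deriv φ t = -(Real.sqrt 2 * Real.sqrt Λ) / κ * S⁻¹ := (key t ht).deriv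
  -- second derivative of φ
  have hdd : deriv (deriv φ) t =
      -(Real.sqrt 2 * Real.sqrt Λ) / κ * (-(C * c) / S ^ 2) := by
    have hDeq : deriv φ =ᶠ[nhds t]
        (fun x => -(Real.sqrt 2 * Real.sqrt Λ) / κ * (Real.sinh (c * (x - t₀)))⁻¹) := by
      filter_upwards [Ioi_mem_nhds ht] with y hy
      exact (key y hy).deriv
    rw [hDeq.deriv_eq]
    have hD : HasDerivAt
        (fun x => -(Real.sqrt 2 * Real.sqrt Λ) / κ * (Real.sinh (c * (x - t₀)))⁻¹)
        (-(Real.sqrt 2 * Real.sqrt Λ) / κ * (-(C * c) / S ^ 2)) t := by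
      have hi : HasDerivAt (fun x => Real.sinh (c * (x - t₀))) (C * c) t :=
        (Real.hasDerivAt_sinh _).comp t (hlin t)
      exact (hi.inv hs.ne').const_mul _
    exact hD.deriv
  -- derivative of a and value of H
  have hda : deriv a t = a₀ * ((1/3) * S ^ ((1:ℝ)/3 - 1) * (C * c)) := by
    have hi : HasDerivAt (fun x => Real.sinh (c * (x - t₀))) (C * c) t :=
      (Real.hasDerivAt_sinh _).comp t (hlin t)
    have hr : HasDerivAt (fun x => (Real.sinh (c * (x - t₀))) ^ ((1:ℝ)/3))
        (((1:ℝ)/3) * S ^ ((1:ℝ)/3 - 1) * (C * c)) t := by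
      have := (Real.hasDerivAt_rpow_const (x := S) (p := (1:ℝ)/3) (Or.inl hs.ne')).comp t hi
      exact this
    have : HasDerivAt a (a₀ * (((1:ℝ)/3) * S ^ ((1:ℝ)/3 - 1) * (C * c))) t := by
      rw [ha]
      exact hr.const_mul a₀
    exact this.deriv
  have hat : a t = a₀ * S ^ ((1:ℝ)/3) := by rw [ha]
  have hSr : (0:ℝ) < S ^ ((1:ℝ)/3) := Real.rpow_pos_of_pos hs _
  have hHt : H t = Real.sqrt Λ * C / S := by
    rw [hH]
    simp only []
    rw [hda, hat]
    have hpow : S ^ ((1:ℝ)/3 - 1) = S ^ ((1:ℝ)/3) / S := by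
      rw [Real.rpow_sub hs, Real.rpow_one]
    rw [hpow, hc]
    field_simp
  refine ⟨?_, ?_, ?_⟩
  · -- first equation
    have hφt : φ t - φ₀ = (Real.sqrt 2 / (3 * κ)) * arccosh (coth (c * (t - t₀))) := by
      rw [hφ]
      ring
    rw [hdφ, hφt]
    have harg : (3 * κ / Real.sqrt 2) * ((Real.sqrt 2 / (3 * κ)) *
        arccosh (coth (c * (t - t₀)))) = arccosh (coth (c * (t - t₀))) := by
      field_simp
    rw [harg, sinh_arccosh_coth hu, ← hS, Real.sqrt_mul (by norm_num : (0:ℝ) ≤ 2)]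
    rcases hκ with h | h <;> rw [h] <;> ring
  · -- Friedmann constraint
    rw [hHt, hdφ]
    field_simp
    linear_combination (2 * C ^ 2 * κ ^ 2 - Real.sqrt 2 ^ 2) * hsqΛ -
      Λ * hsq2 + 2 * Λ * (C ^ 2 - S ^ 2) * hκ2 + 2 * Λ * hCS
  · -- Klein-Gordon equation
    rw [hdd, hHt, hdφ, hc]
    field_simp
    ring
end

section
/- Let α ≠ 0 and s > 1 be real numbers, and let I ⊆ ℝ be an open interval. Suppose y : I → ℝ is differentiable, satisfies 1 < y(x) < s for all x ∈ I, and solves y'(x) = α(y(x) − 1)(y(x) + 1)(y(x) − s). Then the function G(x) = ((y(x) + 1)/(y(x) − 1))^s · (y(x) − s)²/(y(x)² − 1) · e^{−2α(s²−1)x} is constant on I. -/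
/-- Case (d) of Section 4: for the autonomous Abel equation
`y' = α(y - 1)(y + 1)(y - s)` with `1 < y < s`, the first integral
`((y+1)/(y-1))^s (y-s)²/(y²-1) e^{-2α(s²-1)x}` is constant. -/
theorem stmt14 (α s : ℝ) (hα : α ≠ 0) (hs : 1 < s)
    (I : Set ℝ) (hIopen : IsOpen I) (hIconn : IsPreconnected I)
    (y : ℝ → ℝ)
    (hy : ∀ x ∈ I, 1 < y x ∧ y x < s)
    (hode : ∀ x ∈ I, HasDerivAt y (α * (y x - 1) * (y x + 1) * (y x - s)) x)
    (G : ℝ → ℝ)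
    (hG : G = fun x => ((y x + 1) / (y x - 1)) ^ s * ((y x - s) ^ 2 / (y x ^ 2 - 1)) *
      Real.exp (-(2 * α * (s ^ 2 - 1) * x))) :
    ∀ x ∈ I, ∀ x' ∈ I, G x = G x' := by
  have key : ∀ x ∈ I, HasDerivAt G 0 x := by
    intro x hx
    obtain ⟨h1, h2⟩ := hy x hx
    have hu := hode x hx
    set u := y x with hu_def
    set u' := α * (u - 1) * (u + 1) * (u - s) with hu'_def
    have hm1 : (0:ℝ) < u - 1 := by linarith
    have hp1 : (0:ℝ) < u + 1 := by linarith
    have hsq : (0:ℝ) < u ^ 2 - 1 := by nlinarith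
    have ha : (0:ℝ) < (u + 1) / (u - 1) := div_pos hp1 hm1
    -- derivative of the quotient (y+1)/(y-1)
    have hq : HasDerivAt (fun x => (y x + 1) / (y x - 1))
        ((u' * (u - 1) - (u + 1) * u') / (u - 1) ^ 2) x :=
      (hu.add_const 1).div (hu.sub_const 1) (ne_of_gt hm1)
    -- derivative of the rpow factor
    have hP : HasDerivAt (fun x => ((y x + 1) / (y x - 1)) ^ s)
        ((u' * (u - 1) - (u + 1) * u') / (u - 1) ^ 2 * s * ((u + 1) / (u - 1)) ^ (s - 1)) x :=
      hq.rpow_const (Or.inl (ne_of_gt ha))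
    -- derivative of the rational factor
    have hnum : HasDerivAt (fun x => (y x - s) ^ 2) ((2:ℕ) * (u - s) ^ 1 * u') x :=
      (hu.sub_const s).pow 2
    have hden : HasDerivAt (fun x => y x ^ 2 - 1) ((2:ℕ) * u ^ 1 * u') x :=
      (hu.pow 2).sub_const 1
    have hQ : HasDerivAt (fun x => (y x - s) ^ 2 / (y x ^ 2 - 1))
        (((2:ℕ) * (u - s) ^ 1 * u' * (u ^ 2 - 1) - (u - s) ^ 2 * ((2:ℕ) * u ^ 1 * u')) /
          (u ^ 2 - 1) ^ 2) x :=
      hnum.div hden (ne_of_gt hsq)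
    -- derivative of the exponential factor
    have hlin : HasDerivAt (fun x : ℝ => -(2 * α * (s ^ 2 - 1) * x))
        (-(2 * α * (s ^ 2 - 1))) x := by
      simpa using ((hasDerivAt_id x).const_mul (2 * α * (s ^ 2 - 1))).fun_neg
    have hE : HasDerivAt (fun x : ℝ => Real.exp (-(2 * α * (s ^ 2 - 1) * x)))
        (-(2 * α * (s ^ 2 - 1)) * Real.exp (-(2 * α * (s ^ 2 - 1) * x))) x := by
      simpa [mul_comm] using hlin.exp
    have hGd := (hP.mul hQ).mul hE
    rw [hG]
    convert hGd using 1
    · rfl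
    · rfl
    · rfl
    -- show the total derivative is zero
    have hpow : ((u + 1) / (u - 1)) ^ (s - 1) = ((u + 1) / (u - 1)) ^ s / ((u + 1) / (u - 1)) := by
      rw [Real.rpow_sub ha, Real.rpow_one]
    rw [hpow, hu'_def]
    simp only [Pi.mul_apply, ← hu_def]
    have hE0 : Real.exp (-(2 * α * (s ^ 2 - 1) * x)) ≠ 0 := Real.exp_ne_zero _
    field_simp
    ring
  -- conclude: G is constant on the convex set I
  have hconv : Convex ℝ I := hIconn.ordConnected.convex
  intro x hx x' hx'
  have hdiff : DifferentiableOn ℝ G I := fun z hz => ((key z hz).differentiableAt).differentiableWithinAt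
  have hfd : ∀ z ∈ I, fderivWithin ℝ G I z = 0 := by
    intro z hz
    rw [fderivWithin_of_isOpen hIopen hz]
    rw [((key z hz).hasFDerivAt).fderiv]
    ext t
    simp
  exact hconv.is_const_of_fderivWithin_eq_zero hdiff hfd hx hx'
end

section
/- Let I ⊆ ℝ be an open interval, V : ℝ → ℝ continuously differentiable, and let a, φ : I → ℝ be twice differentiable with a(t) > 0 and a'(t) ≠ 0 on I. Set H(t) = a'(t)/a(t) and suppose the flat Friedmann system holds on I: φ''(t) + 3H(t)φ'(t) + V'(φ(t)) = 0 and H(t)² = (1/2)φ'(t)² + V(φ(t)). Then the function ψ(t) = a(t)³ satisfies the Schrödinger-type equation ψ''(t) = 9·V(φ(t))·ψ(t) for all t ∈ I. -/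
/-- Key lemma of Section 6: for any solution `(φ, a)` of the flat Friedmann
system, `ψ = a³` satisfies the Schrödinger-type equation `ψ'' = 9 V(φ(t)) ψ`. -/
theorem stmt18 (I : Set ℝ) (hIopen : IsOpen I) (hIconn : IsPreconnected I)
    (V : ℝ → ℝ) (hV : ContDiff ℝ 1 V)
    (a φ : ℝ → ℝ)
    (ha : ∀ t ∈ I, DifferentiableAt ℝ a t ∧ DifferentiableAt ℝ (deriv a) t)
    (hφd : ∀ t ∈ I, DifferentiableAt ℝ φ t ∧ DifferentiableAt ℝ (deriv φ) t)
    (hapos : ∀ t ∈ I, 0 < a t) (ha'ne : ∀ t ∈ I, deriv a t ≠ 0)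
    (H : ℝ → ℝ) (hH : H = fun t => deriv a t / a t)
    (hfield : ∀ t ∈ I, deriv (deriv φ) t + 3 * H t * deriv φ t + deriv V (φ t) = 0)
    (hconstraint : ∀ t ∈ I, H t ^ 2 = (1/2) * (deriv φ t) ^ 2 + V (φ t)) :
    ∀ t ∈ I, deriv (deriv (fun s => a s ^ 3)) t = 9 * V (φ t) * a t ^ 3 := by
  intro t ht
  have hVd : Differentiable ℝ V := hV.differentiable one_ne_zero
  have htI : I ∈ nhds t := hIopen.mem_nhds ht
  have hA : DifferentiableAt ℝ a t := (ha t ht).1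
  have hA' : DifferentiableAt ℝ (deriv a) t := (ha t ht).2
  have hP : DifferentiableAt ℝ φ t := (hφd t ht).1
  have hP' : DifferentiableAt ℝ (deriv φ) t := (hφd t ht).2
  have hA0 : a t ≠ 0 := ne_of_gt (hapos t ht)
  have hA'0 : deriv a t ≠ 0 := ha'ne t ht
  -- first derivative of a^3, eventually
  have hev : (deriv (fun s => a s ^ 3)) =ᶠ[nhds t] fun s => 3 * a s ^ 2 * deriv a s := by
    filter_upwards [htI] with s hs
    have : HasDerivAt (fun u => a u ^ 3) (3 * a s ^ 2 * deriv a s) s := by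
      simpa using ((ha s hs).1.hasDerivAt.fun_pow 3)
    exact this.deriv
  -- second derivative of a^3 at t
  have h2 : deriv (deriv (fun s => a s ^ 3)) t
      = 3 * (2 * a t * deriv a t) * deriv a t + 3 * a t ^ 2 * deriv (deriv a) t := by
    rw [Filter.EventuallyEq.deriv_eq hev]
    have h1 : HasDerivAt (fun s => 3 * a s ^ 2 * deriv a s)
        ((3 * (2 * a t * deriv a t)) * deriv a t + (3 * a t ^ 2) * deriv (deriv a) t) t := by
      have hsq : HasDerivAt (fun s => 3 * a s ^ 2) (3 * (2 * a t * deriv a t)) t := by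
        simpa [mul_comm, mul_assoc, mul_left_comm] using (hA.hasDerivAt.pow 2).const_mul 3
      exact hsq.mul hA'.hasDerivAt
    rw [h1.deriv]
  -- derivative of constraint
  have hcev : (fun s => (deriv a s / a s) ^ 2)
      =ᶠ[nhds t] fun s => (1/2) * (deriv φ s) ^ 2 + V (φ s) := by
    filter_upwards [htI] with s hs
    have := hconstraint s hs
    rw [hH] at this
    simpa using this
  have hLHS : HasDerivAt (fun s => (deriv a s / a s) ^ 2)
      (2 * (deriv a t / a t) * ((deriv (deriv a) t * a t - deriv a t * deriv a t) / a t ^ 2)) t := by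
    simpa using ((hA'.hasDerivAt.div hA.hasDerivAt hA0).fun_pow 2)
  have hRHS : HasDerivAt (fun s => (1/2) * (deriv φ s) ^ 2 + V (φ s))
      ((1/2) * (2 * deriv φ t * deriv (deriv φ) t) + deriv V (φ t) * deriv φ t) t := by
    have h1 : HasDerivAt (fun s => (1/2) * (deriv φ s) ^ 2)
        ((1/2) * (2 * deriv φ t * deriv (deriv φ) t)) t := by
      simpa [mul_comm, mul_assoc, mul_left_comm] using (hP'.hasDerivAt.pow 2).const_mul (1/2 : ℝ)
    have h2 : HasDerivAt (fun s => V (φ s)) (deriv V (φ t) * deriv φ t) t :=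
      (hVd (φ t)).hasDerivAt.comp t hP.hasDerivAt
    exact h1.add h2
  have hder : 2 * (deriv a t / a t) * ((deriv (deriv a) t * a t - deriv a t * deriv a t) / a t ^ 2)
      = (1/2) * (2 * deriv φ t * deriv (deriv φ) t) + deriv V (φ t) * deriv φ t := by
    rw [← hLHS.deriv, ← hRHS.deriv]
    exact Filter.EventuallyEq.deriv_eq hcev
  have hf := hfield t ht
  have hc := hconstraint t ht
  rw [hH] at hf hc
  simp only at hf hc
  -- algebra
  set A := a t; set A' := deriv a t; set A'' := deriv (deriv a) t
  set P' := deriv φ t; set P'' := deriv (deriv φ) t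
  set Vt := V (φ t); set Vp := deriv V (φ t)
  have key : A'' * A = A' * A' - (3/2) * P' ^ 2 * A ^ 2 := by
    have h3 : P'' + Vp = -3 * (A' / A) * P' := by linarith
    have h4 : 2 * (A' / A) * ((A'' * A - A' * A') / A ^ 2)
        = P' * (P'' + Vp) := by rw [hder]; ring
    rw [h3] at h4
    field_simp at h4
    have hne : (2 : ℝ) * A' * A ≠ 0 := by
      simp [hA'0, hA0]
    have h5 : (2 * A' * A) * (A'' * A) = (2 * A' * A) * (A' * A' - (3/2) * P' ^ 2 * A ^ 2) := by
      linear_combination A' * A * h4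
    exact mul_left_cancel₀ hne h5
  rw [h2]
  have hVt : A' ^ 2 = ((1/2) * P' ^ 2 + Vt) * A ^ 2 := by
    field_simp at hc; linarith
  linear_combination 3 * A * key + 9 * A * hVt
end
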